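/- Suppose γ_s ≤ 1/6 for all s. Fix s ≥ 0 and set c = 4γ_{s+1}²/(1 − 2γ_{s+1})² and C = 2/(1 + √(1 − 4c)). Then for every integer k ≥ 0: (a) if n = 2^s(2k+1), then (1/2)||Q_{2^s}||² ≤ C^{−1}||Q_{2^s}||² ≤ a_n² a_{n−1}² ⋯ a_{n−2^s+1}² ≤ ||Q_{2^s}||²; (b) if n = 2^s(2k+2), then a_n² a_{n−1}² ⋯ a_{n−2^s+1}² ≤ C·||Q_{2^{s+1}}||²/||Q_{2^s}||² ≤ 2·||Q_{2^{s+1}}||²/||Q_{2^s}||². -/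

import Mathlib

open Polynomial MeasureTheory Filter

/-- `r γ s` : the recursively defined scales `r 0 = 1`, `r (s+1) = γ (s+1) * (r s)²`. -/
noncomputable def r (γ : ℕ → ℝ) : ℕ → ℝ
  | 0 => 1
  | s + 1 => γ (s + 1) * (r γ s) ^ 2

/-- `P γ s` : the polynomial `P_{2^s}`, with `P_1 = X - 1` and
`P_{2^{s+1}} = P_{2^s} · (P_{2^s} + r_s)`. -/
noncomputable def P (γ : ℕ → ℝ) : ℕ → Polynomial ℝ
  | 0 => X - 1
  | s + 1 => P γ s * (P γ s + C (r γ s))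

/-- The integral `∫ f dν_s` of a function `f` against the normalized counting measure `ν_s`
on the `2^s` (simple, real) zeros of `P_{2^s} + r_s/2`. -/
noncomputable def nuInt (γ : ℕ → ℝ) (s : ℕ) (f : ℝ → ℝ) : ℝ :=
  (((P γ s + C (r γ s / 2)).roots.map f).sum) / 2 ^ s

/-- The Jacobi parameters `a_n = ‖Q_n‖ / ‖Q_{n-1}‖` (`n ≥ 1`), where
`‖f‖ = (∫ f² dμ)^{1/2}`, together with the convention `a_0 = 0`. -/
noncomputable def jacobiA (μ : MeasureTheory.Measure ℝ) (Q : ℕ → Polynomial ℝ) : ℕ → ℝ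
  | 0 => 0
  | n + 1 => Real.sqrt (∫ x, ((Q (n + 1)).eval x) ^ 2 ∂μ) /
      Real.sqrt (∫ x, ((Q n).eval x) ^ 2 ∂μ)

/-!
Put `T_t = P_{2^t} + r_t/2` and `ε_t = r_t²/4 - r_{t+1}/2`, so that `T_{t+1} = T_t² - ε_t`.
The zeros of `T_{t+1} - w` are those of `T_t ∓ √(w + ε_t)`, which makes averages over them factor:
`∫ p · F(T_t) dμ = ∫ p dμ · ∫ F(T_t) dμ` when `deg p < 2^t`, and `∫ T_t · F(T_{t+1}) dμ = 0`.
Hence `F ↦ ∫ F(T_{t+1}) dμ` is a symmetric functional; if `R_k` are its monic orthogonal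
polynomials, then `Q_{2^{t+1} k} = R_k(T_{t+1})` and, because `T_t² = T_{t+1} + ε_t`,
`Q_{2^t(2k+1)} = T_t · S_k(T_{t+1})` with `S_k` the Christoffel transform of `R_k` at `-ε_t`.
The block ratio `φ_k = ‖Q_{2^t(2k+1)}‖² / ‖Q_{2^{t+1}k}‖²` therefore satisfies `φ_0 = ε_t`,
`φ_{k+1} = ε_t - a_k / φ_k`, where the recurrence coefficients of the `R_k` obey
`0 < a_k ≤ r_{t+1}²/4 = c ε_t²` since `|T_{t+1}| ≤ r_{t+1}/2` on the support of `μ`.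
This traps `φ_k` in `[ψ ε_t, ε_t]` with `ψ (1 - ψ) = c`, i.e. `ψ = C⁻¹`, while `‖Q_{2^t}‖² = ε_t`
and a product of consecutive `a_n²` is a ratio of norms.
-/

section PolynomialLemmas

variable {R : Type*}

lemma degree_sub_lt_of_monic [Ring R] [Nontrivial R] {f g : R[X]} {n : ℕ} (hf : f.Monic)
    (hg : g.Monic) (hfn : f.natDegree = n) (hgn : g.natDegree = n) : (f - g).degree < n := by
  have hdeg : f.degree = n := by rw [degree_eq_natDegree hf.ne_zero, hfn]
  have h := degree_sub_lt_left (hdeg.trans (by rw [degree_eq_natDegree hg.ne_zero, hgn]))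
    hf.ne_zero (by rw [hf.leadingCoeff, hg.leadingCoeff])
  rwa [hdeg] at h

lemma coeff_comp_neg_X [CommRing R] (p : R[X]) (i : ℕ) :
    (p.comp (-X)).coeff i = (-1) ^ i * p.coeff i := by
  induction p using Polynomial.induction_on' with
  | add p q hp hq => rw [add_comp, coeff_add, hp, hq, coeff_add, mul_add]
  | monomial m a =>
    rw [← C_mul_X_pow_eq_monomial, mul_comp, C_comp, pow_comp, X_comp, neg_pow,
      show (-1 : R[X]) = C (-1) by simp, ← C_pow, mul_left_comm, coeff_C_mul, coeff_C_mul_X_pow]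
    split_ifs with h <;> simp [h]

lemma monic_sub_C_mul [Ring R] {f g : R[X]} (hf : f.Monic) (hg : g.natDegree < f.natDegree)
    (a : R) : (f - C a * g).Monic :=
  hf.sub_of_left (degree_lt_degree ((natDegree_C_mul_le a g).trans_lt hg))

lemma natDegree_sub_C_mul [Ring R] {f g : R[X]} (hg : g.natDegree < f.natDegree) (a : R) :
    (f - C a * g).natDegree = f.natDegree :=
  natDegree_sub_eq_left_of_natDegree_lt ((natDegree_C_mul_le a g).trans_lt hg)

lemma comp_ne_zero [Semiring R] [NoZeroDivisors R] {p T : R[X]} (hp : p ≠ 0)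
    (hT : T.natDegree ≠ 0) : p.comp T ≠ 0 := by
  rw [Ne, comp_eq_zero_iff, not_or, not_and_or]
  exact ⟨hp, Or.inr fun h => hT (by rw [h, natDegree_C])⟩

lemma degree_divByMonic_lt_mul [Ring R] [Nontrivial R] {T : R[X]} (hT : T.Monic) {p : R[X]} {k : ℕ}
    (hp : p.degree < (T.natDegree * (k + 1) : ℕ)) : (p /ₘ T).degree < (T.natDegree * k : ℕ) := by
  by_cases h : p /ₘ T = 0
  · rw [h, degree_zero]
    exact WithBot.bot_lt_coe _
  have hTp : T.degree ≤ p.degree := not_lt.mp ((divByMonic_eq_zero_iff hT).not.mp h)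
  have hp0 : p ≠ 0 := fun h0 => h (by simp [h0])
  have hpn : p.natDegree < T.natDegree * (k + 1) := (natDegree_lt_iff_degree_lt hp0).2 hp
  have hTn : T.natDegree ≤ p.natDegree := natDegree_le_natDegree hTp
  refine degree_le_natDegree.trans_lt ?_
  rw [natDegree_divByMonic _ hT]
  exact_mod_cast (by rw [mul_add_one] at hpn; omega : p.natDegree - T.natDegree < T.natDegree * k)

end PolynomialLemmas

section OrthogonalPolynomials

def IsMonicOrthogonal (L : ℝ[X] →ₗ[ℝ] ℝ) (n : ℕ) (f : ℝ[X]) : Prop :=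
  f.Monic ∧ f.natDegree = n ∧ ∀ p : ℝ[X], p.degree < n → L (f * p) = 0

def IsPosDef (L : ℝ[X] →ₗ[ℝ] ℝ) : Prop :=
  ∀ p : ℝ[X], p ≠ 0 → 0 < L (p * p)

def IsSymmetric (L : ℝ[X] →ₗ[ℝ] ℝ) : Prop :=
  ∀ n : ℕ, Odd n → L (X ^ n) = 0

variable {L : ℝ[X] →ₗ[ℝ] ℝ} {n : ℕ} {f g : ℝ[X]}

lemma IsPosDef.apply_mul_self_nonneg (hL : IsPosDef L) (p : ℝ[X]) : 0 ≤ L (p * p) := by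
  rcases eq_or_ne p 0 with rfl | hp
  · simp
  · exact (hL p hp).le

lemma apply_mul_eq_sum_coeff (f p : ℝ[X]) :
    L (f * p) = ∑ i ∈ Finset.range (p.natDegree + 1), p.coeff i * L (f * X ^ i) := by
  conv_lhs => rw [p.as_sum_range_C_mul_X_pow, Finset.mul_sum, map_sum]
  refine Finset.sum_congr rfl fun i _ => ?_
  rw [mul_left_comm, ← smul_eq_C_mul, map_smul, smul_eq_mul]

namespace IsMonicOrthogonal

lemma of_forall_X_pow (hf : f.Monic) (hfn : f.natDegree = n)
    (h : ∀ i < n, L (f * X ^ i) = 0) : IsMonicOrthogonal L n f := by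
  refine ⟨hf, hfn, fun p hp => ?_⟩
  rcases eq_or_ne p 0 with rfl | hp0
  · simp
  rw [apply_mul_eq_sum_coeff]
  refine Finset.sum_eq_zero fun i hi => ?_
  have := (natDegree_lt_iff_degree_lt hp0).2 hp
  rw [h i (by rw [Finset.mem_range] at hi; omega), mul_zero]

lemma apply_mul_of_monic (hf : IsMonicOrthogonal L n f) (hg : g.Monic) (hgn : g.natDegree = n) :
    L (f * g) = L (f * f) := by
  have h := hf.2.2 _ (degree_sub_lt_of_monic hg hf.1 hgn hf.2.1)
  rwa [mul_sub, map_sub, sub_eq_zero] at h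

lemma apply_mul_self_le (hL : IsPosDef L) (hf : IsMonicOrthogonal L n f) (hg : g.Monic)
    (hgn : g.natDegree = n) : L (f * f) ≤ L (g * g) := by
  have h := hf.2.2 _ (degree_sub_lt_of_monic hg hf.1 hgn hf.2.1)
  have hsq : g * g = f * f + 2 • (f * (g - f)) + (g - f) * (g - f) := by ring
  rw [hsq, map_add, map_add, map_nsmul, h, smul_zero, add_zero]
  linarith [hL.apply_mul_self_nonneg (g - f)]

lemma eq (hL : IsPosDef L) (hf : IsMonicOrthogonal L n f) (hg : IsMonicOrthogonal L n g) :
    f = g := by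
  by_contra hne
  have hdeg := degree_sub_lt_of_monic hf.1 hg.1 hf.2.1 hg.2.1
  have h := hL (f - g) (sub_ne_zero.mpr hne)
  rw [sub_mul, map_sub, hf.2.2 _ hdeg, hg.2.2 _ hdeg, sub_zero] at h
  exact h.false

end IsMonicOrthogonal

lemma IsSymmetric.apply_eq_zero (hL : IsSymmetric L) {p : ℝ[X]} (hp : p.comp (-X) = -p) :
    L p = 0 := by
  rw [← one_mul p, apply_mul_eq_sum_coeff]
  refine Finset.sum_eq_zero fun i _ => ?_
  rcases Nat.even_or_odd i with hi | hi
  · have h := coeff_comp_neg_X p i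
    rw [hp, coeff_neg, hi.neg_one_pow, one_mul] at h
    rw [show p.coeff i = 0 by linarith, zero_mul]
  · rw [one_mul, hL i hi, mul_zero]

end OrthogonalPolynomials

section SymmetricOrthogonalPolynomials

variable {L : ℝ[X] →ₗ[ℝ] ℝ} {f g : ℝ[X]} {k : ℕ}

noncomputable def symOrthPoly (L : ℝ[X] →ₗ[ℝ] ℝ) : ℕ → ℝ[X]
  | 0 => 1
  | 1 => X
  | k + 2 => X * symOrthPoly L (k + 1) -
      C (L (symOrthPoly L (k + 1) * symOrthPoly L (k + 1)) /
        L (symOrthPoly L k * symOrthPoly L k)) * symOrthPoly L k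

noncomputable def symRecCoeff (L : ℝ[X] →ₗ[ℝ] ℝ) (k : ℕ) : ℝ :=
  L (symOrthPoly L (k + 1) * symOrthPoly L (k + 1)) / L (symOrthPoly L k * symOrthPoly L k)

lemma symOrthPoly_add_two (k : ℕ) :
    symOrthPoly L (k + 2) = X * symOrthPoly L (k + 1) - C (symRecCoeff L k) * symOrthPoly L k :=
  rfl

lemma symOrthPoly_monic_natDegree :
    ∀ k, (symOrthPoly L k).Monic ∧ (symOrthPoly L k).natDegree = k
  | 0 => ⟨monic_one, natDegree_one⟩
  | 1 => ⟨monic_X, natDegree_X⟩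
  | k + 2 => by
    obtain ⟨hm₁, hd₁⟩ := symOrthPoly_monic_natDegree (k + 1)
    obtain ⟨-, hd₀⟩ := symOrthPoly_monic_natDegree k
    have hXm := monic_X.mul hm₁
    have hXd : (X * symOrthPoly L (k + 1)).natDegree = k + 2 := by
      rw [monic_X.natDegree_mul hm₁, natDegree_X, hd₁, add_comm]
    have hlt : (symOrthPoly L k).natDegree < (X * symOrthPoly L (k + 1)).natDegree := by omega
    rw [symOrthPoly_add_two]
    exact ⟨monic_sub_C_mul hXm hlt _, (natDegree_sub_C_mul hlt _).trans hXd⟩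

lemma symOrthPoly_comp_neg_X : ∀ k, (symOrthPoly L k).comp (-X) = (-1) ^ k * symOrthPoly L k
  | 0 => by simp [symOrthPoly]
  | 1 => by simp [symOrthPoly]
  | k + 2 => by
    rw [symOrthPoly_add_two, sub_comp, mul_comp, mul_comp, X_comp, C_comp,
      symOrthPoly_comp_neg_X (k + 1), symOrthPoly_comp_neg_X k]
    ring

lemma IsSymmetric.apply_symOrthPoly_mul_X_pow (hs : IsSymmetric L) {m j : ℕ} (h : Odd (m + j)) :
    L (symOrthPoly L m * X ^ j) = 0 :=
  hs.apply_eq_zero <| by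
    rw [mul_comp, pow_comp, X_comp, symOrthPoly_comp_neg_X, neg_pow (X : ℝ[X]), ← mul_assoc,
      mul_right_comm _ _ ((-1 : ℝ[X]) ^ j), ← pow_add, h.neg_one_pow]
    ring

lemma isMonicOrthogonal_symOrthPoly (hL : IsPosDef L) (hs : IsSymmetric L) (k : ℕ) :
    IsMonicOrthogonal L k (symOrthPoly L k) := by
  have hmd := symOrthPoly_monic_natDegree (L := L)
  suffices ∀ k, IsMonicOrthogonal L k (symOrthPoly L k) ∧
      IsMonicOrthogonal L (k + 1) (symOrthPoly L (k + 1)) from (this k).1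
  intro k
  induction k with
  | zero =>
    refine ⟨IsMonicOrthogonal.of_forall_X_pow monic_one natDegree_one (by simp),
      IsMonicOrthogonal.of_forall_X_pow monic_X natDegree_X fun i hi => ?_⟩
    obtain rfl : i = 0 := by omega
    simpa [symOrthPoly] using hs 1 odd_one
  | succ k ih =>
    obtain ⟨h₀, h₁⟩ := ih
    refine ⟨h₁, IsMonicOrthogonal.of_forall_X_pow (hmd _).1 (hmd _).2 fun i hi => ?_⟩
    have hrec : L (symOrthPoly L (k + 2) * X ^ i) =
        L (symOrthPoly L (k + 1) * X ^ (i + 1)) -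
          symRecCoeff L k * L (symOrthPoly L k * X ^ i) := by
      rw [symOrthPoly_add_two, sub_mul, map_sub, mul_assoc, mul_left_comm X, ← pow_succ',
        mul_assoc, ← smul_eq_C_mul, map_smul, smul_eq_mul]
    rw [hrec]
    rcases lt_trichotomy i k with hik | rfl | hik
    · rw [h₁.2.2 _ (by rw [degree_X_pow]; exact_mod_cast (by omega : i + 1 < k + 1)),
        h₀.2.2 _ (by rw [degree_X_pow]; exact_mod_cast hik), mul_zero, sub_zero]
    · rw [h₁.apply_mul_of_monic (monic_X_pow _) (natDegree_X_pow _),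
        h₀.apply_mul_of_monic (monic_X_pow _) (natDegree_X_pow _), symRecCoeff,
        div_mul_cancel₀ _ (hL _ (hmd i).1.ne_zero).ne', sub_self]
    · obtain rfl : i = k + 1 := by omega
      rw [hs.apply_symOrthPoly_mul_X_pow ⟨k + 1, by omega⟩,
        hs.apply_symOrthPoly_mul_X_pow ⟨k, by omega⟩, mul_zero, sub_zero]

lemma symRecCoeff_pos (hL : IsPosDef L) (k : ℕ) : 0 < symRecCoeff L k :=
  div_pos (hL _ (symOrthPoly_monic_natDegree _).1.ne_zero)
    (hL _ (symOrthPoly_monic_natDegree _).1.ne_zero)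

lemma apply_symOrthPoly_mul_self_succ (hL : IsPosDef L) (k : ℕ) :
    L (symOrthPoly L (k + 1) * symOrthPoly L (k + 1)) =
      symRecCoeff L k * L (symOrthPoly L k * symOrthPoly L k) :=
  (div_mul_cancel₀ _ (hL _ (symOrthPoly_monic_natDegree _).1.ne_zero).ne').symm

lemma symRecCoeff_le (hL : IsPosDef L) (hs : IsSymmetric L) {M : ℝ}
    (hM : ∀ p : ℝ[X], L (X * p * (X * p)) ≤ M * L (p * p)) (k : ℕ) : symRecCoeff L k ≤ M := by
  obtain ⟨hm, hd⟩ := symOrthPoly_monic_natDegree (L := L) k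
  have hmin := (isMonicOrthogonal_symOrthPoly hL hs (k + 1)).apply_mul_self_le hL
    (monic_X.mul hm) (by rw [monic_X.natDegree_mul hm, natDegree_X, hd, add_comm])
  rw [symRecCoeff, div_le_iff₀ (hL _ hm.ne_zero)]
  exact hmin.trans (hM _)

end SymmetricOrthogonalPolynomials

section Christoffel

variable {L : ℝ[X] →ₗ[ℝ] ℝ} {f g : ℝ[X]} {k : ℕ} {x : ℝ}

noncomputable def christoffelPoly (f g : ℝ[X]) (x : ℝ) : ℝ[X] :=
  (f - C (f.eval x / g.eval x) * g) /ₘ (X - C x)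

lemma X_sub_C_mul_christoffelPoly (hg : g.eval x ≠ 0) :
    (X - C x) * christoffelPoly f g x = f - C (f.eval x / g.eval x) * g :=
  mul_divByMonic_eq_iff_isRoot.mpr <| by
    simp [IsRoot, div_mul_cancel₀ _ hg]

lemma christoffelPoly_monic_natDegree (hf : f.Monic) (hfn : f.natDegree = k + 1)
    (hgn : g.natDegree = k) (hg : g.eval x ≠ 0) :
    (christoffelPoly f g x).Monic ∧ (christoffelPoly f g x).natDegree = k := by
  have hlt : g.natDegree < f.natDegree := by omega
  have hm := monic_sub_C_mul hf hlt (f.eval x / g.eval x)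
  have hd := natDegree_sub_C_mul hlt (f.eval x / g.eval x)
  rw [← X_sub_C_mul_christoffelPoly hg] at hm hd
  have hSm := (monic_X_sub_C x).of_mul_monic_left hm
  rw [(monic_X_sub_C x).natDegree_mul hSm, natDegree_X_sub_C] at hd
  exact ⟨hSm, by omega⟩

lemma apply_sub_C_mul_mul (f g q : ℝ[X]) (c : ℝ) :
    L ((f - C c * g) * q) = L (f * q) - c * L (g * q) := by
  rw [sub_mul, map_sub, mul_assoc, ← smul_eq_C_mul, map_smul, smul_eq_mul]

lemma apply_X_sub_C_mul_christoffelPoly_mul (hf : IsMonicOrthogonal L (k + 1) f)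
    (hg : IsMonicOrthogonal L k g) (hgx : g.eval x ≠ 0) {q : ℝ[X]} (hq : q.degree < k) :
    L ((X - C x) * christoffelPoly f g x * q) = 0 := by
  rw [X_sub_C_mul_christoffelPoly hgx, apply_sub_C_mul_mul,
    hf.2.2 q (hq.trans (by exact_mod_cast k.lt_succ_self)), hg.2.2 q hq, mul_zero, sub_zero]

lemma apply_X_sub_C_mul_christoffelPoly_mul_self (hf : IsMonicOrthogonal L (k + 1) f)
    (hg : IsMonicOrthogonal L k g) (hgx : g.eval x ≠ 0) :
    L ((X - C x) * christoffelPoly f g x * christoffelPoly f g x) =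
      -(f.eval x / g.eval x) * L (g * g) := by
  obtain ⟨hSm, hSd⟩ := christoffelPoly_monic_natDegree hf.1 hf.2.1 hg.2.1 hgx
  rw [X_sub_C_mul_christoffelPoly hgx, apply_sub_C_mul_mul,
    hf.2.2 _ (by rw [degree_eq_natDegree hSm.ne_zero, hSd]; exact_mod_cast k.lt_succ_self),
    hg.apply_mul_of_monic hSm hSd]
  ring

end Christoffel

section ChristoffelRatio

variable {L : ℝ[X] →ₗ[ℝ] ℝ} {x : ℝ}

noncomputable def symOrthRatio (L : ℝ[X] →ₗ[ℝ] ℝ) (x : ℝ) (k : ℕ) : ℝ :=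
  (symOrthPoly L (k + 1)).eval x / (symOrthPoly L k).eval x

lemma symOrthRatio_zero : symOrthRatio L x 0 = x := by
  simp [symOrthRatio, symOrthPoly]

lemma symOrthRatio_succ {k : ℕ} (hk₁ : (symOrthPoly L (k + 1)).eval x ≠ 0) :
    symOrthRatio L x (k + 1) = x - symRecCoeff L k / symOrthRatio L x k := by
  simp only [symOrthRatio, symOrthPoly_add_two, eval_sub, eval_mul, eval_X, eval_C]
  field_simp

lemma apply_X_sub_C_mul_christoffelPoly_symOrthPoly (hL : IsPosDef L) (hs : IsSymmetric L)
    {k : ℕ} (hk : (symOrthPoly L k).eval x ≠ 0) :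
    L ((X - C x) * christoffelPoly (symOrthPoly L (k + 1)) (symOrthPoly L k) x *
        christoffelPoly (symOrthPoly L (k + 1)) (symOrthPoly L k) x) =
      -symOrthRatio L x k * L (symOrthPoly L k * symOrthPoly L k) :=
  apply_X_sub_C_mul_christoffelPoly_mul_self (isMonicOrthogonal_symOrthPoly hL hs (k + 1))
    (isMonicOrthogonal_symOrthPoly hL hs k) hk

lemma neg_symOrthRatio_pos_of_eval_ne_zero (hL : IsPosDef L) (hs : IsSymmetric L)
    (hx : ∀ p : ℝ[X], p ≠ 0 → 0 < L ((X - C x) * p * p)) {k : ℕ}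
    (hk : (symOrthPoly L k).eval x ≠ 0) : 0 < -symOrthRatio L x k := by
  obtain ⟨hm₁, hd₁⟩ := symOrthPoly_monic_natDegree (L := L) (k + 1)
  have h := hx _ (christoffelPoly_monic_natDegree hm₁ hd₁
    (symOrthPoly_monic_natDegree k).2 hk).1.ne_zero
  rw [apply_X_sub_C_mul_christoffelPoly_symOrthPoly hL hs hk] at h
  exact pos_of_mul_pos_left h (hL.apply_mul_self_nonneg _)

lemma eval_symOrthPoly_ne_zero (hL : IsPosDef L) (hs : IsSymmetric L)
    (hx : ∀ p : ℝ[X], p ≠ 0 → 0 < L ((X - C x) * p * p)) : ∀ k, (symOrthPoly L k).eval x ≠ 0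
  | 0 => by simp [symOrthPoly]
  | k + 1 => by
    have hk := eval_symOrthPoly_ne_zero hL hs hx k
    exact (div_ne_zero_iff.mp
      (neg_ne_zero.mp (neg_symOrthRatio_pos_of_eval_ne_zero hL hs hx hk).ne')).1

lemma neg_symOrthRatio_pos (hL : IsPosDef L) (hs : IsSymmetric L)
    (hx : ∀ p : ℝ[X], p ≠ 0 → 0 < L ((X - C x) * p * p)) (k : ℕ) : 0 < -symOrthRatio L x k :=
  neg_symOrthRatio_pos_of_eval_ne_zero hL hs hx (eval_symOrthPoly_ne_zero hL hs hx k)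

end ChristoffelRatio

section Composition

variable {L : ℝ[X] →ₗ[ℝ] ℝ} {T : ℝ[X]}

noncomputable def compFunctional (L : ℝ[X] →ₗ[ℝ] ℝ) (T : ℝ[X]) : ℝ[X] →ₗ[ℝ] ℝ :=
  L ∘ₗ (aeval T).toLinearMap

lemma compFunctional_apply (p : ℝ[X]) : compFunctional L T p = L (p.comp T) := rfl

lemma IsPosDef.comp (hL : IsPosDef L) (hT : T.natDegree ≠ 0) :
    IsPosDef (compFunctional L T) := fun p hp => by
  rw [compFunctional_apply, mul_comp]
  exact hL _ (comp_ne_zero hp hT)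

def IsCompMultiplicative (L : ℝ[X] →ₗ[ℝ] ℝ) (T : ℝ[X]) : Prop :=
  ∀ p F : ℝ[X], p.degree < T.degree → L (p * F.comp T) = L p * L (F.comp T)

lemma IsCompMultiplicative.apply_mul_comp_eq_zero (hmul : IsCompMultiplicative L T) (hT : T.Monic) :
    ∀ {k : ℕ} {F : ℝ[X]}, (∀ q : ℝ[X], q.degree < k → compFunctional L T (F * q) = 0) →
      ∀ {p : ℝ[X]}, p.degree < (T.natDegree * k : ℕ) → L (p * F.comp T) = 0
  | 0, F, _, p, hp => by
    obtain rfl : p = 0 := by simpa using hp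
    simp
  | k + 1, F, hF, p, hp => by
    have hXF : ∀ q : ℝ[X], q.degree < k → compFunctional L T (X * F * q) = 0 := fun q hq => by
      rw [show X * F * q = F * (q * X) by ring]
      refine hF _ ?_
      rw [degree_mul_X]
      exact_mod_cast (WithBot.add_lt_add_iff_right (by simp)).2 hq
    have hsplit : p * F.comp T = p %ₘ T * F.comp T + p /ₘ T * (X * F).comp T := by
      conv_lhs => rw [← modByMonic_add_div p T]
      rw [mul_comp, X_comp]
      ring
    rw [hsplit, map_add, hmul _ _ (degree_modByMonic_lt p hT),
      hmul.apply_mul_comp_eq_zero hT hXF (degree_divByMonic_lt_mul hT hp)]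
    have h1 := hF 1 (by rw [degree_one]; exact_mod_cast k.succ_pos)
    rw [mul_one, compFunctional_apply] at h1
    rw [h1, mul_zero, add_zero]


lemma IsMonicOrthogonal.comp (hmul : IsCompMultiplicative L T) (hT : T.Monic)
    (hT0 : T.natDegree ≠ 0) {k : ℕ} {F : ℝ[X]} (hF : IsMonicOrthogonal (compFunctional L T) k F) :
    IsMonicOrthogonal L (T.natDegree * k) (F.comp T) :=
  ⟨hF.1.comp hT hT0, by rw [natDegree_comp, hF.2.1, mul_comm], fun _ hp => by
    rw [mul_comm]; exact hmul.apply_mul_comp_eq_zero hT hF.2.2 hp⟩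

end Composition

section ContinuedFraction

noncomputable def quadRoot (c : ℝ) : ℝ := (1 + √(1 - 4 * c)) / 2

variable {c : ℝ}

lemma quadRoot_mul_one_sub (hc : c ≤ 1 / 4) : quadRoot c * (1 - quadRoot c) = c := by
  have h := Real.sq_sqrt (by linarith : (0 : ℝ) ≤ 1 - 4 * c)
  rw [quadRoot]
  linear_combination -h / 4

lemma one_half_le_quadRoot : 1 / 2 ≤ quadRoot c := by
  rw [quadRoot]
  linarith [Real.sqrt_nonneg (1 - 4 * c)]

lemma quadRoot_le_one (hc : 0 ≤ c) : quadRoot c ≤ 1 := by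
  rw [quadRoot]
  linarith [Real.sqrt_le_one.mpr (by linarith : 1 - 4 * c ≤ 1)]

lemma le_of_continuedFraction {ε ψ : ℝ} {a φ : ℕ → ℝ} (hε : 0 < ε) (hψ : 0 < ψ)
    (hψ₁ : ψ ≤ 1) (hψc : ψ * (1 - ψ) = c) (ha : ∀ k, a k ≤ c * ε ^ 2) (h₀ : φ 0 = ε)
    (hrec : ∀ k, φ (k + 1) = ε - a k / φ k) : ∀ k, ψ * ε ≤ φ k
  | 0 => by rw [h₀]; nlinarith
  | k + 1 => by
    have ih := le_of_continuedFraction hε hψ hψ₁ hψc ha h₀ hrec k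
    have hφ : 0 < φ k := (mul_pos hψ hε).trans_le ih
    have hdiv : a k / φ k ≤ (1 - ψ) * ε := by
      rw [div_le_iff₀ hφ]
      calc a k ≤ c * ε ^ 2 := ha k
        _ = (1 - ψ) * ε * (ψ * ε) := by rw [← hψc]; ring
        _ ≤ (1 - ψ) * ε * φ k := by gcongr
    rw [hrec]
    linarith

end ContinuedFraction

section CantorPolynomials

def IsCantorSeq (γ : ℕ → ℝ) : Prop := ∀ s : ℕ, 0 < γ (s + 1) ∧ γ (s + 1) < 1 / 4

variable {γ : ℕ → ℝ}

/-- `T_t = P_{2^t} + r_t/2`; `ν_t` is the normalized counting measure on its zeros. -/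
noncomputable def cantorPoly (γ : ℕ → ℝ) (t : ℕ) : ℝ[X] := P γ t + C (r γ t / 2)

noncomputable def cantorShift (γ : ℕ → ℝ) (t : ℕ) : ℝ := r γ t ^ 2 / 4 - r γ (t + 1) / 2

lemma r_pos (hγ : IsCantorSeq γ) : ∀ t, 0 < r γ t
  | 0 => by simp [r]
  | t + 1 => mul_pos (hγ t).1 (pow_pos (r_pos hγ t) 2)

lemma cantorShift_eq (t : ℕ) : cantorShift γ t = r γ t ^ 2 * (1 - 2 * γ (t + 1)) / 4 := by
  rw [cantorShift, r]; ring

lemma r_succ_div_two_lt_cantorShift (hγ : IsCantorSeq γ) (t : ℕ) :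
    r γ (t + 1) / 2 < cantorShift γ t := by
  have := pow_pos (r_pos hγ t) 2
  rw [cantorShift_eq, r]
  nlinarith [(hγ t).2]

lemma cantorShift_pos (hγ : IsCantorSeq γ) (t : ℕ) :
    0 < cantorShift γ t :=
  (div_pos (r_pos hγ (t + 1)) two_pos).trans (r_succ_div_two_lt_cantorShift hγ t)

lemma cantorPoly_zero : cantorPoly γ 0 = X - C (1 / 2) := by
  rw [cantorPoly, P, r, ← C_1, sub_add, ← C_sub]
  norm_num

lemma cantorPoly_succ (t : ℕ) :
    cantorPoly γ (t + 1) = cantorPoly γ t ^ 2 - C (cantorShift γ t) := by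
  have h₁ : C (r γ t) = C (r γ t / 2) + C (r γ t / 2) := by rw [← C_add, add_halves]
  have h₂ : C (r γ t / 2) ^ 2 = C (r γ t ^ 2 / 4) := by rw [← C_pow]; ring_nf
  simp only [cantorPoly, cantorShift, P, C_sub]
  linear_combination P γ t * h₁ - h₂

lemma cantorPoly_monic_natDegree : ∀ t, (cantorPoly γ t).Monic ∧ (cantorPoly γ t).natDegree = 2 ^ t
  | 0 => by rw [cantorPoly_zero]; exact ⟨monic_X_sub_C _, natDegree_X_sub_C _⟩
  | t + 1 => by
    obtain ⟨hm, hd⟩ := cantorPoly_monic_natDegree t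
    have hlt : (C (cantorShift γ t)).natDegree < (cantorPoly γ t ^ 2).natDegree := by
      rw [natDegree_C, hm.natDegree_pow, hd]; positivity
    rw [cantorPoly_succ]
    refine ⟨(hm.pow 2).sub_of_left (degree_lt_degree hlt), ?_⟩
    rw [natDegree_sub_eq_left_of_natDegree_lt hlt, hm.natDegree_pow, hd, pow_succ, mul_comm]

lemma cantorPoly_monic (t : ℕ) : (cantorPoly γ t).Monic := (cantorPoly_monic_natDegree t).1

lemma natDegree_cantorPoly (t : ℕ) : (cantorPoly γ t).natDegree = 2 ^ t :=
  (cantorPoly_monic_natDegree t).2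

lemma degree_cantorPoly (t : ℕ) : (cantorPoly γ t).degree = (2 ^ t : ℕ) := by
  rw [degree_eq_natDegree (cantorPoly_monic t).ne_zero, natDegree_cantorPoly]

end CantorPolynomials

section RootSums

variable {γ : ℕ → ℝ}

noncomputable def cantorRoots (γ : ℕ → ℝ) (t : ℕ) (w : ℝ) : Multiset ℝ :=
  (cantorPoly γ t - C w).roots

noncomputable def rootSum (γ : ℕ → ℝ) (t : ℕ) (w : ℝ) (f : ℝ[X]) : ℝ :=
  ((cantorRoots γ t w).map fun x => f.eval x).sum

lemma eval_cantorPoly_of_mem_cantorRoots {t : ℕ} {w x : ℝ} (hx : x ∈ cantorRoots γ t w) :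
    (cantorPoly γ t).eval x = w := by
  have h := isRoot_of_mem_roots hx
  rwa [IsRoot, eval_sub, eval_C, sub_eq_zero] at h

lemma abs_eval_cantorPoly_le_of_succ (hγ : IsCantorSeq γ) {t : ℕ}
    {x : ℝ} (h : |(cantorPoly γ (t + 1)).eval x| ≤ r γ (t + 1) / 2) :
    |(cantorPoly γ t).eval x| ≤ r γ t / 2 := by
  have hsq : (cantorPoly γ t).eval x ^ 2 = (cantorPoly γ (t + 1)).eval x + cantorShift γ t := by
    rw [cantorPoly_succ]; simp
  refine abs_le_of_sq_le_sq ?_ (by linarith [r_pos hγ t])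
  rw [hsq, cantorShift]
  linarith [(abs_le.1 h).2]

lemma abs_eval_cantorPoly_le_of_le (hγ : IsCantorSeq γ) {t m : ℕ}
    (htm : t ≤ m) {x : ℝ} (h : |(cantorPoly γ m).eval x| ≤ r γ m / 2) :
    |(cantorPoly γ t).eval x| ≤ r γ t / 2 := by
  induction m, htm using Nat.le_induction with
  | base => exact h
  | succ m _ ih => exact ih (abs_eval_cantorPoly_le_of_succ hγ h)

lemma sqrt_add_cantorShift (hγ : IsCantorSeq γ) {t : ℕ} {w : ℝ}
    (hw : |w| ≤ r γ (t + 1) / 2) :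
    √(w + cantorShift γ t) ^ 2 = w + cantorShift γ t ∧ |√(w + cantorShift γ t)| ≤ r γ t / 2 := by
  have hε := r_succ_div_two_lt_cantorShift hγ t
  have hw' := abs_le.1 hw
  have hle : w + cantorShift γ t ≤ (r γ t / 2) ^ 2 := by rw [cantorShift]; linarith
  refine ⟨Real.sq_sqrt (by linarith), ?_⟩
  rw [abs_of_nonneg (Real.sqrt_nonneg _)]
  exact (Real.sqrt_le_sqrt hle).trans_eq (Real.sqrt_sq (by linarith [r_pos hγ t]))

lemma cantorRoots_succ (hγ : IsCantorSeq γ) {t : ℕ} {w : ℝ}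
    (hw : |w| ≤ r γ (t + 1) / 2) :
    cantorRoots γ (t + 1) w = cantorRoots γ t (√(w + cantorShift γ t)) +
      cantorRoots γ t (-√(w + cantorShift γ t)) := by
  have hfac : cantorPoly γ (t + 1) - C w = (cantorPoly γ t - C (√(w + cantorShift γ t))) *
      (cantorPoly γ t - C (-√(w + cantorShift γ t))) := by
    have h := congrArg C (sqrt_add_cantorShift hγ hw).1
    rw [C_pow, C_add] at h
    rw [cantorPoly_succ, C_neg]
    linear_combination h
  have hm : ∀ v, (cantorPoly γ t - C v).Monic := fun v =>
    (cantorPoly_monic t).sub_of_left (degree_C_le.trans_lt (by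
      rw [degree_cantorPoly]; exact_mod_cast pow_pos two_pos t))
  rw [cantorRoots, hfac, roots_mul ((hm _).mul (hm _)).ne_zero]
  rfl

lemma rootSum_succ (hγ : IsCantorSeq γ) {t : ℕ} {w : ℝ}
    (hw : |w| ≤ r γ (t + 1) / 2) (f : ℝ[X]) :
    rootSum γ (t + 1) w f = rootSum γ t (√(w + cantorShift γ t)) f +
      rootSum γ t (-√(w + cantorShift γ t)) f := by
  rw [rootSum, cantorRoots_succ hγ hw, Multiset.map_add, Multiset.sum_add]
  rfl

lemma card_cantorRoots (hγ : IsCantorSeq γ) :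
    ∀ {t : ℕ} {w : ℝ}, |w| ≤ r γ t / 2 → (cantorRoots γ t w).card = 2 ^ t
  | 0, w, _ => by
    rw [cantorRoots, cantorPoly_zero, sub_sub, ← C_add, roots_X_sub_C]
    rfl
  | t + 1, w, hw => by
    have hα := (sqrt_add_cantorShift hγ hw).2
    rw [cantorRoots_succ hγ hw, Multiset.card_add, card_cantorRoots hγ hα,
      card_cantorRoots hγ (by rwa [abs_neg]), pow_succ, mul_two]

lemma rootSum_add (t : ℕ) (w : ℝ) (f g : ℝ[X]) :
    rootSum γ t w (f + g) = rootSum γ t w f + rootSum γ t w g := by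
  simp only [rootSum, eval_add, Multiset.sum_map_add]

lemma rootSum_mul_comp (t : ℕ) (w : ℝ) (p F : ℝ[X]) :
    rootSum γ t w (p * F.comp (cantorPoly γ t)) = rootSum γ t w p * F.eval w := by
  rw [rootSum, rootSum, ← Multiset.sum_map_mul_right]
  refine congrArg _ (Multiset.map_congr rfl fun x hx => ?_)
  rw [eval_mul, eval_comp, eval_cantorPoly_of_mem_cantorRoots hx]

lemma rootSum_comp (hγ : IsCantorSeq γ) {t : ℕ} {w : ℝ}
    (hw : |w| ≤ r γ t / 2) (F : ℝ[X]) :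
    rootSum γ t w (F.comp (cantorPoly γ t)) = 2 ^ t * F.eval w := by
  rw [← one_mul (F.comp _), rootSum_mul_comp, rootSum]
  simp [card_cantorRoots hγ hw]

lemma abs_zero_le_half_r (hγ : IsCantorSeq γ) (t : ℕ) :
    |(0 : ℝ)| ≤ r γ t / 2 := by
  rw [abs_zero]; exact (half_pos (r_pos hγ t)).le

lemma rootSum_eq_modByMonic_add (t : ℕ) (w : ℝ) (p : ℝ[X]) :
    rootSum γ t w p =
      rootSum γ t w (p %ₘ cantorPoly γ t) + rootSum γ t w (p /ₘ cantorPoly γ t) * w := by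
  have h := rootSum_add (γ := γ) t w (p %ₘ cantorPoly γ t)
    (p /ₘ cantorPoly γ t * X.comp (cantorPoly γ t))
  rwa [rootSum_mul_comp, eval_X, X_comp, mul_comm _ (cantorPoly γ t), modByMonic_add_div] at h

lemma degree_divByMonic_cantorPoly_lt {t : ℕ} {p : ℝ[X]} (hp : p.degree < (2 ^ (t + 1) : ℕ)) :
    (p /ₘ cantorPoly γ t).degree < (2 ^ t : ℕ) := by
  have h := degree_divByMonic_lt_mul (cantorPoly_monic (γ := γ) t) (p := p) (k := 1)
  rw [natDegree_cantorPoly, mul_one, ← pow_succ] at h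
  exact h hp

lemma degree_modByMonic_cantorPoly_lt (t : ℕ) (p : ℝ[X]) :
    (p %ₘ cantorPoly γ t).degree < (2 ^ t : ℕ) :=
  (degree_modByMonic_lt p (cantorPoly_monic t)).trans_eq (degree_cantorPoly t)

lemma rootSum_eq_rootSum_zero (hγ : IsCantorSeq γ) :
    ∀ {t : ℕ} {p : ℝ[X]}, p.degree < (2 ^ t : ℕ) →
      ∀ {w : ℝ}, |w| ≤ r γ t / 2 → rootSum γ t w p = rootSum γ t 0 p
  | 0, p, hp, w, hw => by
    obtain ⟨c, rfl⟩ : ∃ c, p = C c :=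
      ⟨_, eq_C_of_degree_le_zero (by simpa [Nat.WithBot.lt_one_iff_le_zero] using hp)⟩
    rw [← C_comp (p := cantorPoly γ 0), rootSum_comp hγ hw,
      rootSum_comp hγ (abs_zero_le_half_r hγ 0), eval_C, eval_C]
  | t + 1, p, hp, w, hw => by
    have hmod := degree_modByMonic_cantorPoly_lt (γ := γ) t p
    have hdiv := degree_divByMonic_cantorPoly_lt (γ := γ) hp
    have key : ∀ v, |v| ≤ r γ (t + 1) / 2 →
        rootSum γ (t + 1) v p = 2 * rootSum γ t 0 (p %ₘ cantorPoly γ t) := by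
      intro v hv
      have hα := (sqrt_add_cantorShift hγ hv).2
      have hα' : |-√(v + cantorShift γ t)| ≤ r γ t / 2 := by rwa [abs_neg]
      rw [rootSum_succ hγ hv, rootSum_eq_modByMonic_add, rootSum_eq_modByMonic_add (w := -_),
        rootSum_eq_rootSum_zero hγ hmod hα, rootSum_eq_rootSum_zero hγ hmod hα',
        rootSum_eq_rootSum_zero hγ hdiv hα, rootSum_eq_rootSum_zero hγ hdiv hα']
      ring
    rw [key w hw, key 0 (abs_zero_le_half_r hγ _)]

lemma rootSum_mul_comp_of_le (hγ : IsCantorSeq γ) {t : ℕ} {p : ℝ[X]}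
    (hp : p.degree < (2 ^ t : ℕ)) (F : ℝ[X]) {j : ℕ} (htj : t ≤ j) :
    ∀ {w : ℝ}, |w| ≤ r γ j / 2 → rootSum γ j w (p * F.comp (cantorPoly γ t)) =
      rootSum γ t 0 p / 2 ^ t * rootSum γ j w (F.comp (cantorPoly γ t)) := by
  induction j, htj using Nat.le_induction with
  | base =>
    intro w hw
    rw [rootSum_mul_comp, rootSum_comp hγ hw, rootSum_eq_rootSum_zero hγ hp hw]
    field_simp
  | succ j _ ih =>
    intro w hw
    have hα := (sqrt_add_cantorShift hγ hw).2
    rw [rootSum_succ hγ hw, rootSum_succ hγ hw, ih hα, ih (by rwa [abs_neg])]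
    ring

end RootSums

section RootLimit

variable {γ : ℕ → ℝ} {L : ℝ[X] →ₗ[ℝ] ℝ}

def IsRootLimit (γ : ℕ → ℝ) (L : ℝ[X] →ₗ[ℝ] ℝ) : Prop :=
  ∀ p : ℝ[X], Tendsto (fun m => nuInt γ m fun x => p.eval x) atTop (nhds (L p))

lemma nuInt_eq_rootSum (m : ℕ) (p : ℝ[X]) :
    nuInt γ m (fun x => p.eval x) = rootSum γ m 0 p / 2 ^ m := by
  simp [nuInt, rootSum, cantorRoots, cantorPoly]

namespace IsRootLimit

lemma tendsto (hL : IsRootLimit γ L) (p : ℝ[X]) :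
    Tendsto (fun m => rootSum γ m 0 p / 2 ^ m) atTop (nhds (L p)) := by
  simpa only [nuInt_eq_rootSum] using hL p

lemma map_one (hL : IsRootLimit γ L) (hγ : IsCantorSeq γ) : L 1 = 1 := by
  refine tendsto_nhds_unique (hL.tendsto 1) (tendsto_const_nhds.congr fun m => ?_)
  rw [← one_comp (p := cantorPoly γ m), rootSum_comp hγ (abs_zero_le_half_r hγ m), eval_one,
    mul_one, div_self (pow_ne_zero _ two_ne_zero)]

lemma apply_mul_comp (hL : IsRootLimit γ L) (hγ : IsCantorSeq γ)
    {t : ℕ} {p : ℝ[X]} (hp : p.degree < (2 ^ t : ℕ)) (F : ℝ[X]) :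
    L (p * F.comp (cantorPoly γ t)) = rootSum γ t 0 p / 2 ^ t * L (F.comp (cantorPoly γ t)) := by
  refine tendsto_nhds_unique (hL.tendsto _) (((hL.tendsto _).const_mul _).congr' ?_)
  filter_upwards [eventually_ge_atTop t] with m hm
  rw [rootSum_mul_comp_of_le hγ hp F hm (abs_zero_le_half_r hγ m), mul_div_assoc]

lemma isCompMultiplicative (hL : IsRootLimit γ L) (hγ : IsCantorSeq γ)
    (t : ℕ) : IsCompMultiplicative L (cantorPoly γ t) := fun p F hp => by
  rw [degree_cantorPoly] at hp
  have h := hL.apply_mul_comp hγ hp 1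
  rw [one_comp, mul_one, hL.map_one hγ, mul_one] at h
  rw [hL.apply_mul_comp hγ hp, h]

lemma apply_cantorPoly_mul_comp_succ (hL : IsRootLimit γ L)
    (hγ : IsCantorSeq γ) (t : ℕ) (F : ℝ[X]) :
    L (cantorPoly γ t * F.comp (cantorPoly γ (t + 1))) = 0 := by
  have hdeg : (cantorPoly γ t).degree < (2 ^ (t + 1) : ℕ) := by
    rw [degree_cantorPoly]; exact_mod_cast Nat.pow_lt_pow_right one_lt_two t.lt_succ_self
  have h0 := abs_zero_le_half_r hγ (t + 1)
  have hα := (sqrt_add_cantorShift hγ h0).2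
  rw [hL.apply_mul_comp hγ hdeg, rootSum_succ hγ h0, ← X_comp (p := cantorPoly γ t),
    rootSum_comp hγ hα, rootSum_comp hγ (by rwa [abs_neg])]
  simp

lemma apply_nonneg (hL : IsRootLimit γ L) (hγ : IsCantorSeq γ) {t : ℕ}
    {q : ℝ[X]} (hq : ∀ x, |(cantorPoly γ t).eval x| ≤ r γ t / 2 → 0 ≤ q.eval x) : 0 ≤ L q := by
  refine ge_of_tendsto (hL.tendsto q) ?_
  filter_upwards [eventually_ge_atTop t] with m hm
  refine div_nonneg (Multiset.sum_nonneg fun y hy => ?_) (by positivity)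
  obtain ⟨x, hx, rfl⟩ := Multiset.mem_map.1 hy
  refine hq x (abs_eval_cantorPoly_le_of_le hγ hm ?_)
  rw [eval_cantorPoly_of_mem_cantorRoots hx]
  exact abs_zero_le_half_r hγ m

end IsRootLimit

end RootLimit

section Pushforward

variable {γ : ℕ → ℝ} {L : ℝ[X] →ₗ[ℝ] ℝ}

noncomputable def cantorFunctional (L : ℝ[X] →ₗ[ℝ] ℝ) (γ : ℕ → ℝ) (t : ℕ) : ℝ[X] →ₗ[ℝ] ℝ :=
  compFunctional L (cantorPoly γ (t + 1))

lemma cantorFunctional_apply (t : ℕ) (p : ℝ[X]) :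
    cantorFunctional L γ t p = L (p.comp (cantorPoly γ (t + 1))) :=
  rfl

lemma X_add_cantorShift_comp (t : ℕ) :
    (X - C (-cantorShift γ t)).comp (cantorPoly γ (t + 1)) = cantorPoly γ t ^ 2 := by
  rw [sub_comp, X_comp, C_comp, cantorPoly_succ, C_neg]
  ring

lemma natDegree_cantorPoly_ne_zero (t : ℕ) : (cantorPoly γ t).natDegree ≠ 0 := by
  rw [natDegree_cantorPoly]; positivity

lemma IsRootLimit.isSymmetric_cantorFunctional (hL : IsRootLimit γ L) (hγ : IsCantorSeq γ)
    (t : ℕ) : IsSymmetric (cantorFunctional L γ t) := by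
  rintro n ⟨j, rfl⟩
  have h := hL.apply_cantorPoly_mul_comp_succ hγ (t + 1) ((X - C (-cantorShift γ (t + 1))) ^ j)
  rw [cantorFunctional_apply, pow_comp, X_comp]
  rwa [pow_comp, X_add_cantorShift_comp, ← pow_mul, ← pow_succ'] at h

lemma cantorFunctional_X_add_cantorShift_mul_pos (hpos : IsPosDef L) (t : ℕ) {p : ℝ[X]}
    (hp : p ≠ 0) :
    0 < cantorFunctional L γ t ((X - C (-cantorShift γ t)) * p * p) := by
  have h := hpos _ (mul_ne_zero (cantorPoly_monic (γ := γ) t).ne_zero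
    (comp_ne_zero hp (natDegree_cantorPoly_ne_zero (γ := γ) (t + 1))))
  rwa [cantorFunctional_apply, mul_comp, mul_comp, X_add_cantorShift_comp,
    show ∀ a b : ℝ[X], a ^ 2 * b * b = a * b * (a * b) from fun a b => by ring]

lemma IsPosDef.cantorFunctional (hpos : IsPosDef L) (t : ℕ) :
    IsPosDef (cantorFunctional L γ t) :=
  hpos.comp (natDegree_cantorPoly_ne_zero _)

lemma IsRootLimit.symRecCoeff_le (hL : IsRootLimit γ L) (hγ : IsCantorSeq γ) (hpos : IsPosDef L)
    (t k : ℕ) : symRecCoeff (cantorFunctional L γ t) k ≤ r γ (t + 1) ^ 2 / 4 := by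
  refine _root_.symRecCoeff_le (hpos.cantorFunctional t)
    (hL.isSymmetric_cantorFunctional hγ t) (fun p => ?_) k
  simp only [cantorFunctional_apply]
  rw [← sub_nonneg, ← smul_eq_mul, ← map_smul, ← map_sub]
  refine hL.apply_nonneg hγ (t := t + 1) fun x hx => ?_
  have hsq : (cantorPoly γ (t + 1)).eval x ^ 2 ≤ r γ (t + 1) ^ 2 / 4 := by
    have := sq_le_sq' (abs_le.1 hx).1 (abs_le.1 hx).2
    linarith
  simp only [eval_sub, eval_smul, eval_comp, eval_mul, eval_X, smul_eq_mul]
  nlinarith [sq_nonneg ((p.eval ((cantorPoly γ (t + 1)).eval x)))]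

end Pushforward

section CantorOrthogonalPolynomials

variable {γ : ℕ → ℝ} {L : ℝ[X] →ₗ[ℝ] ℝ} {Q : ℕ → ℝ[X]}

noncomputable def cantorOrthPoly (L : ℝ[X] →ₗ[ℝ] ℝ) (γ : ℕ → ℝ) (t k : ℕ) : ℝ[X] :=
  symOrthPoly (cantorFunctional L γ t) k

noncomputable def cantorKernelPoly (L : ℝ[X] →ₗ[ℝ] ℝ) (γ : ℕ → ℝ) (t k : ℕ) : ℝ[X] :=
  christoffelPoly (cantorOrthPoly L γ t (k + 1)) (cantorOrthPoly L γ t k) (-cantorShift γ t)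

/-- `‖Q_{2^t(2k+1)}‖² / ‖Q_{2^{t+1}k}‖²`, see `apply_Q_mul_self_odd`. -/
noncomputable def oddBlockRatio (L : ℝ[X] →ₗ[ℝ] ℝ) (γ : ℕ → ℝ) (t k : ℕ) : ℝ :=
  -symOrthRatio (cantorFunctional L γ t) (-cantorShift γ t) k

lemma oddBlockRatio_zero (t : ℕ) : oddBlockRatio L γ t 0 = cantorShift γ t := by
  rw [oddBlockRatio, symOrthRatio_zero, neg_neg]

namespace IsRootLimit

lemma isMonicOrthogonal_cantorOrthPoly (hL : IsRootLimit γ L) (hγ : IsCantorSeq γ)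
    (hpos : IsPosDef L) (t k : ℕ) :
    IsMonicOrthogonal (cantorFunctional L γ t) k (cantorOrthPoly L γ t k) :=
  isMonicOrthogonal_symOrthPoly (hpos.cantorFunctional t) (hL.isSymmetric_cantorFunctional hγ t) k

lemma eval_cantorOrthPoly_ne_zero (hL : IsRootLimit γ L) (hγ : IsCantorSeq γ)
    (hpos : IsPosDef L) (t k : ℕ) : (cantorOrthPoly L γ t k).eval (-cantorShift γ t) ≠ 0 :=
  eval_symOrthPoly_ne_zero (hpos.cantorFunctional t) (hL.isSymmetric_cantorFunctional hγ t)
    (fun _ => cantorFunctional_X_add_cantorShift_mul_pos hpos t) k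

lemma oddBlockRatio_pos (hL : IsRootLimit γ L) (hγ : IsCantorSeq γ) (hpos : IsPosDef L)
    (t k : ℕ) : 0 < oddBlockRatio L γ t k :=
  neg_symOrthRatio_pos (hpos.cantorFunctional t) (hL.isSymmetric_cantorFunctional hγ t)
    (fun _ => cantorFunctional_X_add_cantorShift_mul_pos hpos t) k

lemma oddBlockRatio_succ (hL : IsRootLimit γ L) (hγ : IsCantorSeq γ) (hpos : IsPosDef L)
    (t k : ℕ) : oddBlockRatio L γ t (k + 1) =
      cantorShift γ t - symRecCoeff (cantorFunctional L γ t) k / oddBlockRatio L γ t k := by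
  rw [oddBlockRatio, oddBlockRatio, symOrthRatio_succ (hL.eval_cantorOrthPoly_ne_zero hγ hpos t _),
    div_neg]
  ring

lemma oddBlockRatio_le (hL : IsRootLimit γ L) (hγ : IsCantorSeq γ) (hpos : IsPosDef L)
    (t : ℕ) : ∀ k, oddBlockRatio L γ t k ≤ cantorShift γ t
  | 0 => (oddBlockRatio_zero t).le
  | k + 1 => by
    rw [hL.oddBlockRatio_succ hγ hpos, sub_le_self_iff]
    exact (div_pos (symRecCoeff_pos (hpos.cantorFunctional t) k)
      (hL.oddBlockRatio_pos hγ hpos t k)).le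

lemma Q_two_pow_mul_eq (hL : IsRootLimit γ L) (hγ : IsCantorSeq γ) (hpos : IsPosDef L)
    (hQ : ∀ n, IsMonicOrthogonal L n (Q n)) (t k : ℕ) :
    Q (2 ^ (t + 1) * k) = (cantorOrthPoly L γ t k).comp (cantorPoly γ (t + 1)) := by
  have h := (hL.isMonicOrthogonal_cantorOrthPoly hγ hpos t k).comp
    (hL.isCompMultiplicative hγ (t + 1)) (cantorPoly_monic _) (natDegree_cantorPoly_ne_zero _)
  rw [natDegree_cantorPoly] at h
  exact (hQ _).eq hpos h

lemma isMonicOrthogonal_cantorPoly_mul_comp_cantorKernelPoly (hL : IsRootLimit γ L)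
    (hγ : IsCantorSeq γ) (hpos : IsPosDef L) (t k : ℕ) :
    IsMonicOrthogonal L (2 ^ t * (2 * k + 1))
      (cantorPoly γ t * (cantorKernelPoly L γ t k).comp (cantorPoly γ (t + 1))) := by
  set S := cantorKernelPoly L γ t k
  have hR := hL.isMonicOrthogonal_cantorOrthPoly hγ hpos t
  have hx := hL.eval_cantorOrthPoly_ne_zero hγ hpos t k
  obtain ⟨hSm, hSd⟩ : S.Monic ∧ S.natDegree = k :=
    christoffelPoly_monic_natDegree (hR (k + 1)).1 (hR (k + 1)).2.1 (hR k).2.1 hx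
  have hSTm := hSm.comp (cantorPoly_monic (γ := γ) (t + 1)) (natDegree_cantorPoly_ne_zero _)
  refine ⟨(cantorPoly_monic t).mul hSTm, ?_, fun p hp => ?_⟩
  · rw [(cantorPoly_monic t).natDegree_mul hSTm, natDegree_comp, hSd, natDegree_cantorPoly,
      natDegree_cantorPoly, pow_succ]
    ring
  have hodd : (X * S.comp (X ^ 2 - C (cantorShift γ t))).comp (cantorPoly γ t) =
      cantorPoly γ t * S.comp (cantorPoly γ (t + 1)) := by
    rw [mul_comp, X_comp, comp_assoc, sub_comp, pow_comp, X_comp, C_comp, ← cantorPoly_succ]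
  -- `p %ₘ T_t` is killed by `∫ T_t · F(T_{t+1}) = 0`; on `p /ₘ T_t`, `T_t² = (X + ε_t)(T_{t+1})`
  -- reduces orthogonality to that of the Christoffel polynomial.
  have hsplit : cantorPoly γ t * S.comp (cantorPoly γ (t + 1)) * p =
      p %ₘ cantorPoly γ t * (X * S.comp (X ^ 2 - C (cantorShift γ t))).comp (cantorPoly γ t) +
        p /ₘ cantorPoly γ t * ((X - C (-cantorShift γ t)) * S).comp (cantorPoly γ (t + 1)) := by
    conv_lhs => rw [← modByMonic_add_div p (cantorPoly γ t)]
    rw [hodd, mul_comp, X_add_cantorShift_comp]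
    ring
  have hdeg : (p /ₘ cantorPoly γ t).degree < ((cantorPoly γ (t + 1)).natDegree * k : ℕ) := by
    have h := degree_divByMonic_lt_mul (cantorPoly_monic (γ := γ) t) (p := p) (k := 2 * k)
      (by rwa [natDegree_cantorPoly])
    rw [natDegree_cantorPoly] at h ⊢
    rwa [pow_succ, mul_assoc]
  rw [hsplit, map_add,
    hL.isCompMultiplicative hγ t _ _ (degree_modByMonic_lt p (cantorPoly_monic t)), hodd,
    hL.apply_cantorPoly_mul_comp_succ hγ t, mul_zero, zero_add]
  exact (hL.isCompMultiplicative hγ (t + 1)).apply_mul_comp_eq_zero (cantorPoly_monic _)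
    (fun q hq => apply_X_sub_C_mul_christoffelPoly_mul (hR (k + 1)) (hR k) hx hq) hdeg

lemma apply_Q_mul_self_two_pow_mul (hL : IsRootLimit γ L) (hγ : IsCantorSeq γ)
    (hpos : IsPosDef L) (hQ : ∀ n, IsMonicOrthogonal L n (Q n)) (t k : ℕ) :
    L (Q (2 ^ (t + 1) * k) * Q (2 ^ (t + 1) * k)) =
      cantorFunctional L γ t (cantorOrthPoly L γ t k * cantorOrthPoly L γ t k) := by
  rw [hL.Q_two_pow_mul_eq hγ hpos hQ, cantorFunctional_apply, mul_comp]

lemma Q_two_pow_mul_odd_eq (hL : IsRootLimit γ L) (hγ : IsCantorSeq γ) (hpos : IsPosDef L)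
    (hQ : ∀ n, IsMonicOrthogonal L n (Q n)) (t k : ℕ) :
    Q (2 ^ t * (2 * k + 1)) =
      cantorPoly γ t * (cantorKernelPoly L γ t k).comp (cantorPoly γ (t + 1)) :=
  (hQ _).eq hpos (hL.isMonicOrthogonal_cantorPoly_mul_comp_cantorKernelPoly hγ hpos t k)

lemma apply_Q_mul_self_odd (hL : IsRootLimit γ L) (hγ : IsCantorSeq γ) (hpos : IsPosDef L)
    (hQ : ∀ n, IsMonicOrthogonal L n (Q n)) (t k : ℕ) :
    L (Q (2 ^ t * (2 * k + 1)) * Q (2 ^ t * (2 * k + 1))) =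
      oddBlockRatio L γ t k * L (Q (2 ^ (t + 1) * k) * Q (2 ^ (t + 1) * k)) := by
  have h : cantorFunctional L γ t ((X - C (-cantorShift γ t)) * cantorKernelPoly L γ t k *
      cantorKernelPoly L γ t k) = oddBlockRatio L γ t k *
        cantorFunctional L γ t (cantorOrthPoly L γ t k * cantorOrthPoly L γ t k) :=
    apply_X_sub_C_mul_christoffelPoly_symOrthPoly (hpos.cantorFunctional t)
      (hL.isSymmetric_cantorFunctional hγ t) (hL.eval_cantorOrthPoly_ne_zero hγ hpos t k)
  rw [cantorFunctional_apply, mul_comp, mul_comp, X_add_cantorShift_comp] at h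
  rw [hL.Q_two_pow_mul_odd_eq hγ hpos hQ, hL.apply_Q_mul_self_two_pow_mul hγ hpos hQ, ← h]
  ring_nf

lemma apply_Q_mul_self_even (hL : IsRootLimit γ L) (hγ : IsCantorSeq γ) (hpos : IsPosDef L)
    (hQ : ∀ n, IsMonicOrthogonal L n (Q n)) (t k : ℕ) :
    L (Q (2 ^ t * (2 * k + 2)) * Q (2 ^ t * (2 * k + 2))) =
      (cantorShift γ t - oddBlockRatio L γ t (k + 1)) *
        L (Q (2 ^ t * (2 * k + 1)) * Q (2 ^ t * (2 * k + 1))) := by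
  have hφ := (hL.oddBlockRatio_pos hγ hpos t k).ne'
  rw [show 2 ^ t * (2 * k + 2) = 2 ^ (t + 1) * (k + 1) by ring, hL.apply_Q_mul_self_odd hγ hpos hQ,
    hL.apply_Q_mul_self_two_pow_mul hγ hpos hQ, hL.apply_Q_mul_self_two_pow_mul hγ hpos hQ,
    cantorOrthPoly, cantorOrthPoly, apply_symOrthPoly_mul_self_succ (hpos.cantorFunctional t),
    hL.oddBlockRatio_succ hγ hpos]
  field_simp
  ring

lemma apply_Q_mul_self_succ_le (hL : IsRootLimit γ L) (hγ : IsCantorSeq γ) (hpos : IsPosDef L)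
    (hQ : ∀ n, IsMonicOrthogonal L n (Q n)) (t m : ℕ) :
    L (Q (2 ^ t * (m + 1)) * Q (2 ^ t * (m + 1))) ≤
      cantorShift γ t * L (Q (2 ^ t * m) * Q (2 ^ t * m)) := by
  obtain ⟨k, rfl | rfl⟩ := Nat.even_or_odd' m
  · rw [hL.apply_Q_mul_self_odd hγ hpos hQ, show 2 ^ t * (2 * k) = 2 ^ (t + 1) * k by ring]
    exact mul_le_mul_of_nonneg_right (hL.oddBlockRatio_le hγ hpos t k)
      (hpos.apply_mul_self_nonneg _)
  · rw [show 2 * k + 1 + 1 = 2 * k + 2 by ring, hL.apply_Q_mul_self_even hγ hpos hQ]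
    exact mul_le_mul_of_nonneg_right (by linarith [hL.oddBlockRatio_pos hγ hpos t (k + 1)])
      (hpos.apply_mul_self_nonneg _)

lemma apply_Q_two_pow_mul_self (hL : IsRootLimit γ L) (hγ : IsCantorSeq γ) (hpos : IsPosDef L)
    (hQ : ∀ n, IsMonicOrthogonal L n (Q n)) (t : ℕ) :
    L (Q (2 ^ t) * Q (2 ^ t)) = cantorShift γ t := by
  have h := hL.apply_Q_mul_self_odd hγ hpos hQ t 0
  rw [hL.apply_Q_mul_self_two_pow_mul hγ hpos hQ, cantorOrthPoly, symOrthPoly, mul_one,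
    cantorFunctional, compFunctional_apply, one_comp, hL.map_one hγ, mul_one,
    oddBlockRatio_zero] at h
  simpa using h

end IsRootLimit

end CantorOrthogonalPolynomials

section Bounds

variable {γ : ℕ → ℝ} {L : ℝ[X] →ₗ[ℝ] ℝ} {Q : ℕ → ℝ[X]}

lemma r_succ_sq_div_four_eq (hγ : IsCantorSeq γ) (t : ℕ) :
    r γ (t + 1) ^ 2 / 4 = 4 * γ (t + 1) ^ 2 / (1 - 2 * γ (t + 1)) ^ 2 * cantorShift γ t ^ 2 := by
  have h : 1 - 2 * γ (t + 1) ≠ 0 := by linarith [(hγ t).2]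
  rw [cantorShift_eq, r, div_mul_eq_mul_div, eq_div_iff (pow_ne_zero 2 h)]
  ring

namespace IsRootLimit

lemma quadRoot_mul_le_oddBlockRatio (hL : IsRootLimit γ L) (hγ : IsCantorSeq γ)
    (hpos : IsPosDef L) {t : ℕ} (h6 : γ (t + 1) ≤ 1 / 6) (k : ℕ) :
    quadRoot (4 * γ (t + 1) ^ 2 / (1 - 2 * γ (t + 1)) ^ 2) * cantorShift γ t ≤
      oddBlockRatio L γ t k := by
  have hγ₀ := (hγ t).1
  have hc₀ : 0 ≤ 4 * γ (t + 1) ^ 2 / (1 - 2 * γ (t + 1)) ^ 2 := by positivity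
  have hc : 4 * γ (t + 1) ^ 2 / (1 - 2 * γ (t + 1)) ^ 2 ≤ 1 / 4 := by
    rw [div_le_iff₀ (by nlinarith)]
    nlinarith
  exact le_of_continuedFraction (cantorShift_pos hγ t)
    (one_half_pos.trans_le one_half_le_quadRoot) (quadRoot_le_one hc₀) (quadRoot_mul_one_sub hc)
    (fun k => (hL.symRecCoeff_le hγ hpos t k).trans_eq (r_succ_sq_div_four_eq hγ t))
    (oddBlockRatio_zero t) (hL.oddBlockRatio_succ hγ hpos t) k

lemma odd_block_bounds (hL : IsRootLimit γ L) (hγ : IsCantorSeq γ) (hpos : IsPosDef L)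
    (hQ : ∀ n, IsMonicOrthogonal L n (Q n)) {t : ℕ} (h6 : γ (t + 1) ≤ 1 / 6) (k : ℕ) :
    quadRoot (4 * γ (t + 1) ^ 2 / (1 - 2 * γ (t + 1)) ^ 2) * L (Q (2 ^ t) * Q (2 ^ t)) ≤
        L (Q (2 ^ t * (2 * k + 1)) * Q (2 ^ t * (2 * k + 1))) /
          L (Q (2 ^ (t + 1) * k) * Q (2 ^ (t + 1) * k)) ∧
      L (Q (2 ^ t * (2 * k + 1)) * Q (2 ^ t * (2 * k + 1))) /
          L (Q (2 ^ (t + 1) * k) * Q (2 ^ (t + 1) * k)) ≤ L (Q (2 ^ t) * Q (2 ^ t)) := by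
  rw [hL.apply_Q_mul_self_odd hγ hpos hQ, mul_div_cancel_right₀ _ (hpos _ (hQ _).1.ne_zero).ne',
    hL.apply_Q_two_pow_mul_self hγ hpos hQ]
  exact ⟨hL.quadRoot_mul_le_oddBlockRatio hγ hpos h6 k, hL.oddBlockRatio_le hγ hpos t k⟩

lemma even_block_le (hL : IsRootLimit γ L) (hγ : IsCantorSeq γ) (hpos : IsPosDef L)
    (hQ : ∀ n, IsMonicOrthogonal L n (Q n)) {t : ℕ} (h6 : γ (t + 1) ≤ 1 / 6) (k : ℕ) :
    L (Q (2 ^ t * (2 * k + 2)) * Q (2 ^ t * (2 * k + 2))) /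
        L (Q (2 ^ t * (2 * k + 1)) * Q (2 ^ t * (2 * k + 1))) ≤
      (quadRoot (4 * γ (t + 1) ^ 2 / (1 - 2 * γ (t + 1)) ^ 2))⁻¹ *
        (L (Q (2 ^ (t + 1)) * Q (2 ^ (t + 1))) / L (Q (2 ^ t) * Q (2 ^ t))) := by
  set ψ := quadRoot (4 * γ (t + 1) ^ 2 / (1 - 2 * γ (t + 1)) ^ 2)
  set N := L (Q (2 ^ (t + 1) * k) * Q (2 ^ (t + 1) * k))
  have hN : 0 < N := hpos _ (hQ _).1.ne_zero
  have hψ : 0 < ψ := one_half_pos.trans_le one_half_le_quadRoot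
  have hε := cantorShift_pos hγ t
  have hnum := hL.apply_Q_mul_self_succ_le hγ hpos hQ (t + 1) k
  have hden : ψ * cantorShift γ t * N ≤ L (Q (2 ^ t * (2 * k + 1)) * Q (2 ^ t * (2 * k + 1))) := by
    rw [hL.apply_Q_mul_self_odd hγ hpos hQ]
    exact mul_le_mul_of_nonneg_right (hL.quadRoot_mul_le_oddBlockRatio hγ hpos h6 k) hN.le
  rw [hL.apply_Q_two_pow_mul_self hγ hpos hQ, hL.apply_Q_two_pow_mul_self hγ hpos hQ,
    show 2 ^ t * (2 * k + 2) = 2 ^ (t + 1) * (k + 1) by ring]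
  calc _ ≤ cantorShift γ (t + 1) * N / (ψ * cantorShift γ t * N) :=
        div_le_div₀ (mul_pos (cantorShift_pos hγ _) hN).le hnum (by positivity) hden
    _ = ψ⁻¹ * (cantorShift γ (t + 1) / cantorShift γ t) := by field_simp

end IsRootLimit

end Bounds

section Integral

variable {μ : Measure ℝ} {Q : ℕ → ℝ[X]}

noncomputable def polyIntegral (μ : Measure ℝ)
    (hint : ∀ p : ℝ[X], Integrable (fun x => p.eval x) μ) : ℝ[X] →ₗ[ℝ] ℝ where
  toFun p := ∫ x, p.eval x ∂μ
  map_add' p q := by simp only [eval_add]; exact integral_add (hint p) (hint q)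
  map_smul' c p := by
    simp only [eval_smul, smul_eq_mul, RingHom.id_apply]
    exact integral_const_mul c _

lemma polyIntegral_mul_self (hint : ∀ p : ℝ[X], Integrable (fun x => p.eval x) μ) (p : ℝ[X]) :
    polyIntegral μ hint (p * p) = ∫ x, p.eval x ^ 2 ∂μ := by
  simp [polyIntegral, sq]

lemma prod_jacobiA_sq (hQ : ∀ n, 0 < ∫ x, (Q n).eval x ^ 2 ∂μ) {m n : ℕ} (hmn : m ≤ n) :
    ∏ j ∈ Finset.Icc (m + 1) n, jacobiA μ Q j ^ 2 =
      (∫ x, (Q n).eval x ^ 2 ∂μ) / ∫ x, (Q m).eval x ^ 2 ∂μ := by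
  rw [Finset.Icc_add_one_left_eq_Ioc]
  induction n, hmn using Nat.le_induction with
  | base => simp [(hQ m).ne']
  | succ n hmn ih =>
    rw [Finset.prod_Ioc_succ_top hmn, ih, jacobiA, div_pow, Real.sq_sqrt (hQ _).le,
      Real.sq_sqrt (hQ _).le]
    field_simp [(hQ n).ne']

end Integral

theorem stmt_16_general (γ : ℕ → ℝ) (hγ : ∀ s : ℕ, 0 < γ (s + 1) ∧ γ (s + 1) < 1 / 4)
    (μ : Measure ℝ)
    (hμint : ∀ p : Polynomial ℝ, Integrable (fun x => p.eval x) μ)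
    (hμpos : ∀ p : Polynomial ℝ, p ≠ 0 → 0 < ∫ x, (p.eval x) ^ 2 ∂μ)
    (hμconv : ∀ p : Polynomial ℝ,
      Tendsto (fun s => nuInt γ s (fun x => p.eval x)) atTop (nhds (∫ x, p.eval x ∂μ)))
    (Q : ℕ → Polynomial ℝ) (hQmonic : ∀ n, (Q n).Monic) (hQdeg : ∀ n, (Q n).natDegree = n)
    (hQorth : ∀ n : ℕ, ∀ p : Polynomial ℝ, p.degree < (n : WithBot ℕ) →
      ∫ x, (Q n).eval x * p.eval x ∂μ = 0)
    (hγ6 : ∀ s : ℕ, γ (s + 1) ≤ 1 / 6) (s : ℕ) :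
    ∀ k : ℕ,
      ((1 / 2) * ∫ x, ((Q (2 ^ s)).eval x) ^ 2 ∂μ ≤
          (2 / (1 + Real.sqrt (1 - 4 * (4 * γ (s + 1) ^ 2 / (1 - 2 * γ (s + 1)) ^ 2))))⁻¹ *
            ∫ x, ((Q (2 ^ s)).eval x) ^ 2 ∂μ ∧
        (2 / (1 + Real.sqrt (1 - 4 * (4 * γ (s + 1) ^ 2 / (1 - 2 * γ (s + 1)) ^ 2))))⁻¹ *
            (∫ x, ((Q (2 ^ s)).eval x) ^ 2 ∂μ) ≤
          ∏ j ∈ Finset.Icc (2 ^ s * (2 * k + 1) - 2 ^ s + 1) (2 ^ s * (2 * k + 1)),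
            (jacobiA μ Q j) ^ 2 ∧
        ∏ j ∈ Finset.Icc (2 ^ s * (2 * k + 1) - 2 ^ s + 1) (2 ^ s * (2 * k + 1)),
            (jacobiA μ Q j) ^ 2 ≤
          ∫ x, ((Q (2 ^ s)).eval x) ^ 2 ∂μ) ∧
      (∏ j ∈ Finset.Icc (2 ^ s * (2 * k + 2) - 2 ^ s + 1) (2 ^ s * (2 * k + 2)),
            (jacobiA μ Q j) ^ 2 ≤
          (2 / (1 + Real.sqrt (1 - 4 * (4 * γ (s + 1) ^ 2 / (1 - 2 * γ (s + 1)) ^ 2)))) *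
            ((∫ x, ((Q (2 ^ (s + 1))).eval x) ^ 2 ∂μ) / ∫ x, ((Q (2 ^ s)).eval x) ^ 2 ∂μ) ∧
        (2 / (1 + Real.sqrt (1 - 4 * (4 * γ (s + 1) ^ 2 / (1 - 2 * γ (s + 1)) ^ 2)))) *
            ((∫ x, ((Q (2 ^ (s + 1))).eval x) ^ 2 ∂μ) / ∫ x, ((Q (2 ^ s)).eval x) ^ 2 ∂μ) ≤
          2 * ((∫ x, ((Q (2 ^ (s + 1))).eval x) ^ 2 ∂μ) / ∫ x, ((Q (2 ^ s)).eval x) ^ 2 ∂μ)) := by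
  intro k
  set L := polyIntegral μ hμint
  set c := 4 * γ (s + 1) ^ 2 / (1 - 2 * γ (s + 1)) ^ 2
  have hL : IsRootLimit γ L := hμconv
  have hpos : IsPosDef L := fun p hp => (polyIntegral_mul_self hμint p).symm ▸ hμpos p hp
  have hQ : ∀ n, IsMonicOrthogonal L n (Q n) := fun n =>
    ⟨hQmonic n, hQdeg n, fun p hp => by simpa [L, polyIntegral] using hQorth n p hp⟩
  have hN (n : ℕ) : ∫ x, (Q n).eval x ^ 2 ∂μ = L (Q n * Q n) := (polyIntegral_mul_self hμint _).symm
  have hC : 2 / (1 + √(1 - 4 * c)) = (quadRoot c)⁻¹ := by rw [quadRoot, inv_div]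
  have hodd : 2 ^ s * (2 * k + 1) = 2 ^ (s + 1) * k + 2 ^ s := by ring
  have heven : 2 ^ s * (2 * k + 2) = 2 ^ s * (2 * k + 1) + 2 ^ s := by ring
  have hQpos (n : ℕ) : 0 < ∫ x, (Q n).eval x ^ 2 ∂μ := hμpos _ (hQmonic n).ne_zero
  rw [hodd, Nat.add_sub_cancel, ← hodd, heven, Nat.add_sub_cancel, ← heven,
    prod_jacobiA_sq hQpos (hodd ▸ Nat.le_add_right _ _),
    prod_jacobiA_sq hQpos (heven ▸ Nat.le_add_right _ _), hC, inv_inv]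
  simp only [hN]
  obtain ⟨hlow, hup⟩ := hL.odd_block_bounds hγ hpos hQ (hγ6 s) k
  have hratio : 0 ≤ L (Q (2 ^ (s + 1)) * Q (2 ^ (s + 1))) / L (Q (2 ^ s) * Q (2 ^ s)) :=
    div_nonneg (hpos.apply_mul_self_nonneg _) (hpos.apply_mul_self_nonneg _)
  have hψ : 1 / 2 ≤ quadRoot c := one_half_le_quadRoot
  have hψinv : (quadRoot c)⁻¹ ≤ 2 := by
    rw [inv_le_comm₀ (one_half_pos.trans_le hψ) two_pos]; linarith
  refine ⟨⟨mul_le_mul_of_nonneg_right hψ (hpos.apply_mul_self_nonneg _), hlow, hup⟩,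
    hL.even_block_le hγ hpos hQ (hγ6 s) k, mul_le_mul_of_nonneg_right hψinv hratio⟩

theorem stmt_16 (γ : ℕ → ℝ) (hγ : ∀ s : ℕ, 0 < γ (s + 1) ∧ γ (s + 1) < 1 / 4)
    (μ : Measure ℝ) [IsProbabilityMeasure μ]
    (hμint : ∀ p : Polynomial ℝ, Integrable (fun x => p.eval x) μ)
    (hμpos : ∀ p : Polynomial ℝ, p ≠ 0 → 0 < ∫ x, (p.eval x) ^ 2 ∂μ)
    (hμconv : ∀ p : Polynomial ℝ,
      Tendsto (fun s => nuInt γ s (fun x => p.eval x)) atTop (nhds (∫ x, p.eval x ∂μ)))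
    (Q : ℕ → Polynomial ℝ) (hQmonic : ∀ n, (Q n).Monic) (hQdeg : ∀ n, (Q n).natDegree = n)
    (hQorth : ∀ n : ℕ, ∀ p : Polynomial ℝ, p.degree < (n : WithBot ℕ) →
      ∫ x, (Q n).eval x * p.eval x ∂μ = 0)
    (hγ6 : ∀ s : ℕ, γ (s + 1) ≤ 1 / 6) (s : ℕ) :
    ∀ k : ℕ,
      ((1 / 2) * ∫ x, ((Q (2 ^ s)).eval x) ^ 2 ∂μ ≤
          (2 / (1 + Real.sqrt (1 - 4 * (4 * γ (s + 1) ^ 2 / (1 - 2 * γ (s + 1)) ^ 2))))⁻¹ *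
            ∫ x, ((Q (2 ^ s)).eval x) ^ 2 ∂μ ∧
        (2 / (1 + Real.sqrt (1 - 4 * (4 * γ (s + 1) ^ 2 / (1 - 2 * γ (s + 1)) ^ 2))))⁻¹ *
            (∫ x, ((Q (2 ^ s)).eval x) ^ 2 ∂μ) ≤
          ∏ j ∈ Finset.Icc (2 ^ s * (2 * k + 1) - 2 ^ s + 1) (2 ^ s * (2 * k + 1)),
            (jacobiA μ Q j) ^ 2 ∧
        ∏ j ∈ Finset.Icc (2 ^ s * (2 * k + 1) - 2 ^ s + 1) (2 ^ s * (2 * k + 1)),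
            (jacobiA μ Q j) ^ 2 ≤
          ∫ x, ((Q (2 ^ s)).eval x) ^ 2 ∂μ) ∧
      (∏ j ∈ Finset.Icc (2 ^ s * (2 * k + 2) - 2 ^ s + 1) (2 ^ s * (2 * k + 2)),
            (jacobiA μ Q j) ^ 2 ≤
          (2 / (1 + Real.sqrt (1 - 4 * (4 * γ (s + 1) ^ 2 / (1 - 2 * γ (s + 1)) ^ 2)))) *
            ((∫ x, ((Q (2 ^ (s + 1))).eval x) ^ 2 ∂μ) / ∫ x, ((Q (2 ^ s)).eval x) ^ 2 ∂μ) ∧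
        (2 / (1 + Real.sqrt (1 - 4 * (4 * γ (s + 1) ^ 2 / (1 - 2 * γ (s + 1)) ^ 2)))) *
            ((∫ x, ((Q (2 ^ (s + 1))).eval x) ^ 2 ∂μ) / ∫ x, ((Q (2 ^ s)).eval x) ^ 2 ∂μ) ≤
          2 * ((∫ x, ((Q (2 ^ (s + 1))).eval x) ^ 2 ∂μ) / ∫ x, ((Q (2 ^ s)).eval x) ^ 2 ∂μ)) :=
  stmt_16_general γ hγ μ hμint hμpos hμconv Q hQmonic hQdeg hQorth hγ6 s
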